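/- There exists a connected countable graph A such that FU(A) = 1, FI(A) = 2, BU(A) = 2, and BI(A) = ∞. (Such a graph is obtained by taking copies X_i, i ∈ ℤ, of an infinite complete graph, joining each vertex of X_i by an edge to its copies in X_{i−1} and X_{i+1}, and then gluing one further infinite complete graph to an arbitrary vertex of the resulting graph.) In particular, each of the inequalities FU(G) ≤ BU(G), BU(G) ≤ BI(G), FU(G) ≤ FI(G), FI(G) ≤ BI(G) can be strict. -/

import Mathlib

open SimpleGraph

/-- A set of vertices of a graph is *bounded* if it has finite diameter with
respect to the natural graph metric. -/
def BoundedSet {V : Type} (G : SimpleGraph V) (S : Set V) : Prop :=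
  ∃ n : ℕ, ∀ u ∈ S, ∀ v ∈ S, G.dist u v ≤ n

/-- `UCC G W` is the cardinality (in `ℕ∞`) of the set of connected components of
`G \ W` whose vertex sets are unbounded with respect to the graph metric of `G`. -/
noncomputable def UCC {V : Type} (G : SimpleGraph V) (W : Set V) : ℕ∞ :=
  {c : (G.induce Wᶜ).ConnectedComponent | ¬ BoundedSet G (Subtype.val '' c.supp)}.encard

/-- `ICC G W` is the cardinality (in `ℕ∞`) of the set of connected components of
`G \ W` with infinitely many vertices. -/
noncomputable def ICC {V : Type} (G : SimpleGraph V) (W : Set V) : ℕ∞ :=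
  {c : (G.induce Wᶜ).ConnectedComponent | c.supp.Infinite}.encard

/-- `BU G`: the number of BU-ends, i.e. the supremum of `UCC (G \ V)` over all
bounded vertex sets `V`. -/
noncomputable def BU {V : Type} (G : SimpleGraph V) : ℕ∞ :=
  ⨆ (W : Set V) (_ : BoundedSet G W), UCC G W

/-- `BI G`: the number of BI-ends, i.e. the supremum of `ICC (G \ V)` over all
bounded vertex sets `V`. -/
noncomputable def BI {V : Type} (G : SimpleGraph V) : ℕ∞ :=
  ⨆ (W : Set V) (_ : BoundedSet G W), ICC G W

/-- `FU G`: the number of FU-ends, i.e. the supremum of `UCC (G \ V)` over all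
finite vertex sets `V`. -/
noncomputable def FU {V : Type} (G : SimpleGraph V) : ℕ∞ :=
  ⨆ (W : Set V) (_ : W.Finite), UCC G W

/-- `FI G`: the number of FI-ends, i.e. the supremum of `ICC (G \ V)` over all
finite vertex sets `V`. -/
noncomputable def FI {V : Type} (G : SimpleGraph V) : ℕ∞ :=
  ⨆ (W : Set V) (_ : W.Finite), ICC G W


namespace StrictEnds

abbrev Vt : Type := (ℤ × ℕ) ⊕ ℕ

def vl (i : ℤ) (n : ℕ) : Vt := Sum.inl (i, n)
def vr (n : ℕ) : Vt := Sum.inr n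

def rel : Vt → Vt → Prop
  | Sum.inl (i,n), Sum.inl (j,m) => i = j ∨ (n = m ∧ (i = j + 1 ∨ j = i + 1))
  | Sum.inl (i,n), Sum.inr _ => i = 0 ∧ n = 0
  | Sum.inr _, Sum.inl (i,n) => i = 0 ∧ n = 0
  | Sum.inr _, Sum.inr _ => True

def A : SimpleGraph Vt where
  Adj u v := u ≠ v ∧ rel u v
  symm := ⟨by
    rintro (⟨i,n⟩|a) (⟨j,m⟩|b) ⟨hne, hr⟩ <;>
      refine ⟨Ne.symm hne, ?_⟩ <;> simp only [rel] at hr ⊢ <;> tauto⟩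
  loopless := ⟨fun v h => h.1 rfl⟩

def π : Vt → ℤ := Sum.elim Prod.fst (fun _ => 0)

@[simp] lemma π_vl (i : ℤ) (n : ℕ) : π (vl i n) = i := rfl
@[simp] lemma π_vr (n : ℕ) : π (vr n) = 0 := rfl

lemma adj_ll {i j : ℤ} {n m : ℕ} (hne : (i,n) ≠ (j,m))
    (h : i = j ∨ (n = m ∧ (i = j + 1 ∨ j = i + 1))) : A.Adj (vl i n) (vl j m) := by
  exact ⟨by simpa [vl] using hne, h⟩

lemma adj_layer {i : ℤ} {n m : ℕ} (h : n ≠ m) : A.Adj (vl i n) (vl i m) :=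
  adj_ll (by simp [h]) (Or.inl rfl)

lemma adj_step (i : ℤ) (n : ℕ) : A.Adj (vl i n) (vl (i+1) n) :=
  adj_ll (by simp) (Or.inr ⟨rfl, Or.inr rfl⟩)

lemma adj_rr {n m : ℕ} (h : n ≠ m) : A.Adj (vr n) (vr m) :=
  ⟨by simpa [vr], trivial⟩

lemma adj_glue (n : ℕ) : A.Adj (vl 0 0) (vr n) :=
  ⟨by simp [vl, vr], ⟨rfl, rfl⟩⟩

lemma adj_pi {u v : Vt} (h : A.Adj u v) : |π u - π v| ≤ 1 := by
  obtain ⟨hne, hr⟩ := h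
  rcases u with ⟨i,n⟩|a <;> rcases v with ⟨j,m⟩|b <;> simp only [rel] at hr
  · rcases hr with rfl | ⟨rfl, rfl | rfl⟩ <;> simp [π]
  · simp [π, hr.1]
  · simp [π, hr.1]
  · simp [π]

lemma walk_pi {u v : Vt} (w : A.Walk u v) : |π u - π v| ≤ (w.length : ℤ) := by
  induction w with
  | nil => simp
  | cons h p ih =>
    rename_i a b c
    have h1 := adj_pi h
    simp only [SimpleGraph.Walk.length_cons]
    push_cast
    have : |π a - π c| ≤ |π a - π b| + |π b - π c| := abs_sub_le _ _ _
    omega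


lemma walk_invariant {V : Type*} {G : SimpleGraph V} (P : V → Prop)
    (h : ∀ u v, G.Adj u v → P u → P v) {u v : V} (w : G.Walk u v) (hu : P u) : P v := by
  induction w with
  | nil => exact hu
  | cons a _ ih => exact ih (h _ _ a hu)

lemma reach_invariant {V : Type*} {G : SimpleGraph V} (P : V → Prop)
    (h : ∀ u v, G.Adj u v → P u → P v) {u v : V} (huv : G.Reachable u v) (hu : P u) : P v := by
  obtain ⟨w⟩ := huv; exact walk_invariant P h w hu

lemma adj_step' (i : ℤ) (n : ℕ) : A.Adj (vl (i-1) n) (vl i n) := by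
  have := adj_step (i-1) n; simpa using this

lemma reach_col0 : ∀ i : ℤ, A.Reachable (vl i 0) (vl 0 0) := by
  intro i
  induction i using Int.induction_on with
  | zero => exact Reachable.refl _
  | succ k ih => exact ((adj_step k 0).symm.reachable).trans ih
  | pred k ih =>
    have h := (adj_step (-(k:ℤ)-1) 0).reachable
    have : (-(k:ℤ)-1) + 1 = -k := by ring
    rw [this] at h
    exact h.trans ih

lemma reach_base : ∀ v : Vt, A.Reachable v (vl 0 0) := by
  rintro (⟨i,n⟩|a)
  · show A.Reachable (vl i n) _
    refine Reachable.trans ?_ (reach_col0 i)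
    rcases eq_or_ne n 0 with rfl | h
    · exact Reachable.refl _
    · exact (adj_layer h).reachable
  · exact ((adj_glue a).symm.reachable)

lemma A_conn : A.Connected := by
  rw [connected_iff]
  refine ⟨fun u v => (reach_base u).trans (reach_base v).symm, ⟨vr 0⟩⟩

lemma dist_pi (u v : Vt) : |π u - π v| ≤ (A.dist u v : ℤ) := by
  obtain ⟨w, hw⟩ := (A_conn u v).exists_walk_length_eq_dist
  simpa [hw] using walk_pi w

lemma dist_adj_le {u v : Vt} (h : A.Adj u v) : A.dist u v ≤ 1 := by
  simpa using SimpleGraph.dist_le (Walk.cons h Walk.nil)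

lemma dist_col0_aux : ∀ (k : ℕ) (i : ℤ), A.dist (vl i 0) (vl (i + k) 0) ≤ k := by
  intro k
  induction k with
  | zero => intro i; simp
  | succ k ih =>
    intro i
    have h1 : A.dist (vl i 0) (vl (i + k) 0) ≤ k := ih i
    have h2 : A.dist (vl (i + k) 0) (vl (i + (k+1)) 0) ≤ 1 := by
      have := dist_adj_le (adj_step (i + k) 0)
      have e : (i:ℤ) + k + 1 = i + (k+1) := by push_cast; ring
      rwa [e] at this
    calc A.dist (vl i 0) (vl (i + (k+1)) 0)
        ≤ A.dist (vl i 0) (vl (i + k) 0) + A.dist (vl (i + k) 0) (vl (i + (k+1)) 0) :=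
          A_conn.dist_triangle
      _ ≤ k + 1 := by omega

lemma dist_col0 (i j : ℤ) : A.dist (vl i 0) (vl j 0) ≤ (i - j).natAbs := by
  rcases le_total i j with h | h
  · have e : j = i + ((j - i).toNat : ℤ) := by omega
    have := dist_col0_aux (j-i).toNat i
    rw [← e] at this
    refine this.trans ?_; omega
  · have e : i = j + ((i - j).toNat : ℤ) := by omega
    have := dist_col0_aux (i-j).toNat j
    rw [← e] at this
    rw [SimpleGraph.dist_comm]
    refine this.trans ?_; omega

lemma dist_to_col0 (u : Vt) : A.dist u (vl (π u) 0) ≤ 1 := by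
  rcases u with ⟨i,n⟩|a
  · show A.dist (vl i n) (vl i 0) ≤ 1
    rcases eq_or_ne n 0 with rfl | h
    · simp [SimpleGraph.dist_self]
    · exact dist_adj_le (adj_layer h)
  · show A.dist (vr a) (vl 0 0) ≤ 1
    exact dist_adj_le (adj_glue a).symm

lemma dist_le_pi (u v : Vt) : A.dist u v ≤ (π u - π v).natAbs + 2 := by
  have t1 : A.dist u v ≤ A.dist u (vl (π u) 0) + A.dist (vl (π u) 0) v := A_conn.dist_triangle
  have t2 : A.dist (vl (π u) 0) v ≤ A.dist (vl (π u) 0) (vl (π v) 0) + A.dist (vl (π v) 0) v :=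
    A_conn.dist_triangle
  have h1 := dist_to_col0 u
  have h2 := dist_to_col0 v
  rw [SimpleGraph.dist_comm (u := vl (π v) 0)] at t2
  have h3 := dist_col0 (π u) (π v)
  omega

lemma bounded_of_pi {S : Set Vt} (a b : ℤ) (h : ∀ v ∈ S, a ≤ π v ∧ π v ≤ b) :
    BoundedSet A S := by
  refine ⟨(b - a).toNat + 2, fun u hu v hv => ?_⟩
  have := dist_le_pi u v
  have h1 := h u hu; have h2 := h v hv
  omega

lemma unbounded_of_pi {S : Set Vt}
    (h : ∀ b : ℕ, ∃ u ∈ S, ∃ v ∈ S, (b:ℤ) < |π u - π v|) : ¬ BoundedSet A S := by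
  rintro ⟨n, hn⟩
  obtain ⟨u, hu, v, hv, hlt⟩ := h n
  have hd := hn u hu v hv
  have hp := dist_pi u v
  omega


section Induced

variable {W : Set Vt}

lemma ind_adj {u v : Vt} (hu : u ∈ Wᶜ) (hv : v ∈ Wᶜ) (h : A.Adj u v) :
    (A.induce Wᶜ).Adj ⟨u,hu⟩ ⟨v,hv⟩ := h

/-- vertices in the same column `N` in consecutive interval survive & are connected -/
lemma chain_reach (N : ℕ) (j : ℤ) (k : ℕ)
    (h : ∀ m : ℤ, j ≤ m → m ≤ j + k → vl m N ∉ W)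
    (hj : vl j N ∈ Wᶜ) (hk : vl (j + k) N ∈ Wᶜ) :
    (A.induce Wᶜ).Reachable ⟨vl j N, hj⟩ ⟨vl (j + k) N, hk⟩ := by
  induction k with
  | zero =>
    have : (⟨vl (j + (0:ℕ)) N, hk⟩ : ↥Wᶜ) = ⟨vl j N, hj⟩ := by
      refine Subtype.ext ?_; norm_num
    rw [this]
  | succ k ih =>
    have h' : ∀ m : ℤ, j ≤ m → m ≤ j + k → vl m N ∉ W := by
      intro m hm1 hm2; exact h m hm1 (by push_cast; omega)
    have hmid : vl (j + k) N ∈ Wᶜ := h' _ (by omega) (by omega)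
    have step : A.Adj (vl (j + k) N) (vl (j + (k+1)) N) := by
      have := adj_step (j + k) N
      have e : (j:ℤ) + k + 1 = j + ((k:ℕ)+1 : ℕ) := by push_cast; ring
      rwa [e] at this
    exact (ih h' hmid).trans (ind_adj hmid hk step).reachable

lemma comp_eq_of_reach {u v : Vt} (hu : u ∈ Wᶜ) (hv : v ∈ Wᶜ)
    (h : (A.induce Wᶜ).Reachable ⟨u,hu⟩ ⟨v,hv⟩) :
    (A.induce Wᶜ).connectedComponentMk ⟨u,hu⟩ = (A.induce Wᶜ).connectedComponentMk ⟨v,hv⟩ :=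
  ConnectedComponent.sound h

/-- reach between same-column vertices when all of the column in between survives -/
lemma col_reach (N : ℕ) (i j : ℤ)
    (h : ∀ m : ℤ, min i j ≤ m → m ≤ max i j → vl m N ∉ W)
    (hi : vl i N ∈ Wᶜ) (hj : vl j N ∈ Wᶜ) :
    (A.induce Wᶜ).Reachable ⟨vl i N, hi⟩ ⟨vl j N, hj⟩ := by
  rcases le_total i j with hij | hij
  · have e : j = i + ((j - i).toNat : ℤ) := by omega
    have h' : ∀ m : ℤ, i ≤ m → m ≤ i + ((j-i).toNat : ℤ) → vl m N ∉ W := by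
      intro m h1 h2; exact h m (by omega) (by omega)
    have := chain_reach N i (j-i).toNat h' hi (by rw [← e]; exact hj)
    rwa [show (⟨vl (i + ((j-i).toNat:ℤ)) N, _⟩ : ↥Wᶜ) = ⟨vl j N, hj⟩ from
      Subtype.ext (congrArg (fun t => vl t N) e.symm)] at this
  · have e : i = j + ((i - j).toNat : ℤ) := by omega
    have h' : ∀ m : ℤ, j ≤ m → m ≤ j + ((i-j).toNat : ℤ) → vl m N ∉ W := by
      intro m h1 h2; exact h m (by omega) (by omega)
    have := chain_reach N j (i-j).toNat h' hj (by rw [← e]; exact hi)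
    rw [show (⟨vl (j + ((i-j).toNat:ℤ)) N, _⟩ : ↥Wᶜ) = ⟨vl i N, hi⟩ from
      Subtype.ext (congrArg (fun t => vl t N) e.symm)] at this
    exact this.symm

end Induced


section FiniteW

variable {W : Set Vt}

def sndc : Vt → ℕ := Sum.elim Prod.snd id

lemma exists_goodN (hW : W.Finite) : ∃ N : ℕ, ∀ i : ℤ, vl i N ∉ W := by
  obtain ⟨N, hN⟩ := ((hW.image sndc).infinite_compl).nonempty
  exact ⟨N, fun i hi => hN (Set.mem_image_of_mem sndc hi)⟩

lemma ladder_reach (hW : W.Finite) :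
    ∃ N : ℕ, (∀ i : ℤ, vl i N ∉ W) ∧
      ∀ (i j : ℤ) (n m : ℕ) (hi : vl i n ∈ Wᶜ) (hj : vl j m ∈ Wᶜ),
        (A.induce Wᶜ).Reachable ⟨vl i n, hi⟩ ⟨vl j m, hj⟩ := by
  obtain ⟨N, hN⟩ := exists_goodN hW
  refine ⟨N, hN, fun i j n m hi hj => ?_⟩
  have hiN : vl i N ∈ Wᶜ := hN i
  have hjN : vl j N ∈ Wᶜ := hN j
  have r1 : (A.induce Wᶜ).Reachable ⟨vl i n, hi⟩ ⟨vl i N, hiN⟩ := by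
    rcases eq_or_ne n N with rfl | h
    · exact Reachable.refl _
    · exact (ind_adj hi hiN (adj_layer h)).reachable
  have r3 : (A.induce Wᶜ).Reachable ⟨vl j m, hj⟩ ⟨vl j N, hjN⟩ := by
    rcases eq_or_ne m N with rfl | h
    · exact Reachable.refl _
    · exact (ind_adj hj hjN (adj_layer h)).reachable
  have r2 := col_reach N i j (fun m _ _ => hN m) hiN hjN
  exact (r1.trans r2).trans r3.symm

lemma bounded_supp_of_all_inr {c : (A.induce Wᶜ).ConnectedComponent}
    (h : ∀ x ∈ c.supp, ∃ a : ℕ, (x : Vt) = vr a) :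
    BoundedSet A (Subtype.val '' c.supp) := by
  refine bounded_of_pi 0 0 ?_
  rintro v ⟨x, hx, rfl⟩
  obtain ⟨a, ha⟩ := h x hx
  simp [ha]

lemma UCC_le_one (hW : W.Finite) : UCC A W ≤ 1 := by
  obtain ⟨N, hN, hreach⟩ := ladder_reach hW
  rw [UCC, Set.encard_le_one_iff]
  intro c c' hc hc'
  suffices H : ∀ d : (A.induce Wᶜ).ConnectedComponent,
      ¬ BoundedSet A (Subtype.val '' d.supp) →
      d = (A.induce Wᶜ).connectedComponentMk ⟨vl 0 N, hN 0⟩ by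
    rw [H c hc, H c' hc']
  intro d hd
  by_cases hall : ∀ x ∈ d.supp, ∃ a : ℕ, (x : Vt) = vr a
  · exact absurd (bounded_supp_of_all_inr hall) hd
  push_neg at hall
  obtain ⟨x, hx, hnotr⟩ := hall
  obtain ⟨⟨i, n⟩ | a, hxW⟩ := x
  · rw [ConnectedComponent.mem_supp_iff] at hx
    rw [← hx]
    exact ConnectedComponent.sound (hreach i 0 n N hxW (hN 0))
  · exact absurd rfl (hnotr a)

lemma ICC_le_two (hW : W.Finite) : ICC A W ≤ 2 := by
  obtain ⟨N, hN, hreach⟩ := ladder_reach hW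
  set c₀ := (A.induce Wᶜ).connectedComponentMk ⟨vl 0 N, hN 0⟩ with hc₀
  have hsub : {c : (A.induce Wᶜ).ConnectedComponent | c.supp.Infinite} ⊆
      {c₀} ∪ {c | ∃ (a : ℕ) (ha : vr a ∈ Wᶜ), c = (A.induce Wᶜ).connectedComponentMk ⟨vr a, ha⟩} := by
    intro c _
    obtain ⟨⟨⟨i,n⟩ | a, hxW⟩, rfl⟩ := c.exists_rep
    · left
      exact ConnectedComponent.sound (hreach i 0 n N hxW (hN 0))
    · right; exact ⟨a, hxW, rfl⟩
  refine le_trans (Set.encard_mono hsub) ?_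
  refine le_trans (Set.encard_union_le _ _) ?_
  have h1 : ({c₀} : Set _).encard = 1 := Set.encard_singleton _
  have h2 : {c | ∃ (a : ℕ) (ha : vr a ∈ Wᶜ), c = (A.induce Wᶜ).connectedComponentMk ⟨vr a, ha⟩}.encard ≤ 1 := by
    rw [Set.encard_le_one_iff]
    rintro c c' ⟨a, ha, rfl⟩ ⟨b, hb, rfl⟩
    rcases eq_or_ne a b with rfl | hab
    · rfl
    · exact ConnectedComponent.sound (ind_adj ha hb (adj_rr hab)).reachable
  rw [h1]
  exact add_le_add le_rfl h2

end FiniteW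


lemma one_le_UCC_empty : 1 ≤ UCC A (∅ : Set Vt) := by
  rw [UCC, Set.one_le_encard_iff_nonempty]
  have h0 : vl 0 0 ∈ (∅ : Set Vt)ᶜ := by simp
  refine ⟨(A.induce (∅:Set Vt)ᶜ).connectedComponentMk ⟨vl 0 0, h0⟩, ?_⟩
  simp only [Set.mem_setOf_eq]
  apply unbounded_of_pi
  intro b
  have hmem : ∀ i : ℤ, vl i 0 ∈
      Subtype.val '' ((A.induce (∅:Set Vt)ᶜ).connectedComponentMk ⟨vl 0 0, h0⟩).supp := by
    intro i
    have hi : vl i 0 ∈ (∅ : Set Vt)ᶜ := by simp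
    refine ⟨⟨vl i 0, hi⟩, ?_, rfl⟩
    rw [ConnectedComponent.mem_supp_iff]
    exact ConnectedComponent.sound (col_reach 0 i 0 (fun m _ _ => by simp) hi h0)
  refine ⟨vl (b+1) 0, hmem _, vl 0 0, hmem 0, ?_⟩
  rw [π_vl, π_vl, sub_zero, abs_of_nonneg (by positivity)]
  omega

def W₁ : Set Vt := {vl 0 0}

lemma left_pres : ∀ u v : ↥W₁ᶜ, (A.induce W₁ᶜ).Adj u v → (u:Vt).isLeft → (v:Vt).isLeft := by
  rintro ⟨⟨i,n⟩|a, hu⟩ ⟨⟨j,m⟩|b, hv⟩ hadj h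
  · simp
  · obtain ⟨hne, hr⟩ := hadj
    obtain ⟨h1, h2⟩ : i = 0 ∧ n = 0 := hr
    subst h1; subst h2
    exact absurd rfl hu
  · simp at h
  · simp at h

lemma two_le_ICC_W₁ : 2 ≤ ICC A W₁ := by
  have h1 : vl 0 1 ∈ W₁ᶜ := by simp [W₁, vl]
  have hr0 : vr 0 ∈ W₁ᶜ := by simp [W₁, vr, vl]
  set c₁ := (A.induce W₁ᶜ).connectedComponentMk ⟨vl 0 1, h1⟩ with hc₁
  set c₂ := (A.induce W₁ᶜ).connectedComponentMk ⟨vr 0, hr0⟩ with hc₂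
  have hne : c₁ ≠ c₂ := by
    intro h
    rw [hc₁, hc₂, ConnectedComponent.eq] at h
    have := reach_invariant (fun x : ↥W₁ᶜ => (x:Vt).isLeft) left_pres h (by simp [vl])
    simp [vr] at this
  have hinf1 : c₁.supp.Infinite := by
    apply Set.infinite_of_injective_forall_mem
      (f := fun n : ℕ => (⟨vl 0 (n+1), by simp [W₁, vl]⟩ : ↥W₁ᶜ))
    · intro a b hab
      simp only [Subtype.mk.injEq, vl, Sum.inl.injEq, Prod.mk.injEq] at hab
      omega
    · intro n
      rw [ConnectedComponent.mem_supp_iff]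
      rcases eq_or_ne n 0 with rfl | hn
      · rfl
      · exact ConnectedComponent.sound
          (ind_adj _ h1 (adj_layer (by omega))).reachable
  have hinf2 : c₂.supp.Infinite := by
    apply Set.infinite_of_injective_forall_mem
      (f := fun n : ℕ => (⟨vr n, by simp [W₁, vr, vl]⟩ : ↥W₁ᶜ))
    · intro a b hab
      simp only [Subtype.mk.injEq, vr, Sum.inr.injEq] at hab
      exact hab
    · intro n
      rw [ConnectedComponent.mem_supp_iff]
      rcases eq_or_ne n 0 with rfl | hn
      · rfl
      · exact ConnectedComponent.sound (ind_adj _ hr0 (adj_rr hn)).reachable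
  calc (2:ℕ∞) = ({c₁, c₂} : Set _).encard := (Set.encard_pair hne).symm
    _ ≤ ICC A W₁ := by
        apply Set.encard_mono
        rintro c (rfl|rfl)
        exacts [hinf1, hinf2]


def W₀ : Set Vt := {v | ∃ n : ℕ, v = vl 0 n}

lemma W₀_bounded : BoundedSet A W₀ := by
  refine bounded_of_pi 0 0 ?_
  rintro v ⟨n, rfl⟩
  simp

lemma W₀_surv {i : ℤ} (h : i ≠ 0) (n : ℕ) : vl i n ∈ W₀ᶜ := by
  rintro ⟨m, hm⟩
  simp only [vl, Sum.inl.injEq, Prod.mk.injEq] at hm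
  exact h hm.1

lemma pos_pres : ∀ u v : ↥W₀ᶜ, (A.induce W₀ᶜ).Adj u v → 0 < π (u:Vt) → 0 < π (v:Vt) := by
  rintro ⟨⟨i,n⟩|a, hu⟩ ⟨⟨j,m⟩|b, hv⟩ hadj h
  · obtain ⟨hne, hr⟩ := hadj
    show (0:ℤ) < j
    simp only [π, Sum.elim_inl] at h
    have hj0 : j ≠ 0 := by
      rintro rfl
      exact hv ⟨m, rfl⟩
    rcases hr with rfl | ⟨rfl, h2 | h2⟩ <;> omega
  · obtain ⟨hne, hr⟩ := hadj
    obtain ⟨h1, h2⟩ : i = 0 ∧ n = 0 := hr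
    simp only [π, Sum.elim_inl] at h
    omega
  · simp [π] at h
  · simp [π] at h

lemma supp_right {i : ℤ} (hi : 1 ≤ i) (h1 : vl 1 0 ∈ W₀ᶜ) (hii : vl i 0 ∈ W₀ᶜ) :
    (A.induce W₀ᶜ).Reachable ⟨vl 1 0, h1⟩ ⟨vl i 0, hii⟩ := by
  refine col_reach 0 1 i (fun m hm1 hm2 => ?_) h1 hii
  have : m ≠ 0 := by
    rcases le_total 1 i with h | h
    · simp only [min_def, max_def] at hm1 hm2
      intro hm; omega
    · intro hm; omega
  exact W₀_surv this 0

lemma supp_left {i : ℤ} (hi : i ≤ -1) (h1 : vl (-1) 0 ∈ W₀ᶜ) (hii : vl i 0 ∈ W₀ᶜ) :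
    (A.induce W₀ᶜ).Reachable ⟨vl (-1) 0, h1⟩ ⟨vl i 0, hii⟩ := by
  refine col_reach 0 (-1) i (fun m hm1 hm2 => ?_) h1 hii
  have : m ≠ 0 := by
    simp only [min_def, max_def] at hm1 hm2
    intro hm
    rcases le_total (-1 : ℤ) i with h | h <;> omega
  exact W₀_surv this 0

lemma two_le_UCC_W₀ : 2 ≤ UCC A W₀ := by
  have hP : vl 1 0 ∈ W₀ᶜ := W₀_surv one_ne_zero 0
  have hM : vl (-1) 0 ∈ W₀ᶜ := W₀_surv (by norm_num) 0
  set cP := (A.induce W₀ᶜ).connectedComponentMk ⟨vl 1 0, hP⟩ with hcP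
  set cM := (A.induce W₀ᶜ).connectedComponentMk ⟨vl (-1) 0, hM⟩ with hcM
  have hne : cP ≠ cM := by
    intro h
    rw [hcP, hcM, ConnectedComponent.eq] at h
    have := reach_invariant (fun x : ↥W₀ᶜ => 0 < π (x:Vt)) pos_pres h (by simp)
    simp [π, vl] at this
  have hUP : ¬ BoundedSet A (Subtype.val '' cP.supp) := by
    apply unbounded_of_pi
    intro b
    have hmem : ∀ k : ℕ, vl (1 + k) 0 ∈ Subtype.val '' cP.supp := by
      intro k
      have hk : vl (1 + (k:ℤ)) 0 ∈ W₀ᶜ := W₀_surv (by omega) 0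
      refine ⟨⟨vl (1 + k) 0, hk⟩, ?_, rfl⟩
      rw [ConnectedComponent.mem_supp_iff]
      exact (ConnectedComponent.sound (supp_right (by omega) hP hk)).symm
    refine ⟨vl (1 + (b+1)) 0, hmem (b+1), vl (1 + 0) 0, by simpa using hmem 0, ?_⟩
    rw [π_vl, π_vl]
    rw [show (1 + ((b:ℤ)+1)) - (1 + 0) = (b:ℤ)+1 by push_cast; ring]
    rw [abs_of_nonneg (by positivity)]
    omega
  have hUM : ¬ BoundedSet A (Subtype.val '' cM.supp) := by
    apply unbounded_of_pi
    intro b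
    have hmem : ∀ k : ℕ, vl (-1 - k) 0 ∈ Subtype.val '' cM.supp := by
      intro k
      have hk : vl (-1 - (k:ℤ)) 0 ∈ W₀ᶜ := W₀_surv (by omega) 0
      refine ⟨⟨vl (-1 - k) 0, hk⟩, ?_, rfl⟩
      rw [ConnectedComponent.mem_supp_iff]
      exact (ConnectedComponent.sound (supp_left (by omega) hM hk)).symm
    refine ⟨vl (-1 - ((b:ℤ)+1)) 0, by simpa using hmem (b+1), vl (-1 - (0:ℕ)) 0, by simpa using hmem 0, ?_⟩
    rw [π_vl, π_vl]
    rw [show (-1 - ((b:ℤ)+1)) - (-1 - ((0:ℕ):ℤ)) = -((b:ℤ)+1) by push_cast; ring]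
    rw [abs_neg, abs_of_nonneg (by positivity)]
    omega
  calc (2:ℕ∞) = ({cP, cM} : Set _).encard := (Set.encard_pair hne).symm
    _ ≤ UCC A W₀ := by
        apply Set.encard_mono
        rintro c (rfl|rfl)
        exacts [hUP, hUM]


lemma UCC_le_two {W : Set Vt} (hW : BoundedSet A W) : UCC A W ≤ 2 := by
  rcases W.eq_empty_or_nonempty with rfl | ⟨w₀, hw₀⟩
  · exact (UCC_le_one Set.finite_empty).trans one_le_two
  obtain ⟨nb, hnb⟩ := hW
  set a₁ : ℤ := π w₀ - nb with ha₁
  set a₂ : ℤ := π w₀ + nb with ha₂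
  have hWrange : ∀ w ∈ W, a₁ ≤ π w ∧ π w ≤ a₂ := by
    intro w hw
    have hd : (A.dist w w₀ : ℤ) ≤ nb := by exact_mod_cast hnb w hw w₀ hw₀
    have := abs_le.mp ((dist_pi w w₀).trans hd)
    constructor <;> omega
  have hsurvP : ∀ v : Vt, a₂ < π v → v ∈ Wᶜ := by
    intro v h hv
    have := (hWrange v hv).2; omega
  have hsurvM : ∀ v : Vt, π v < a₁ → v ∈ Wᶜ := by
    intro v h hv
    have := (hWrange v hv).1; omega
  have hP : vl (a₂+1) 0 ∈ Wᶜ := hsurvP _ (by rw [π_vl]; omega)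
  have hM : vl (a₁-1) 0 ∈ Wᶜ := hsurvM _ (by rw [π_vl]; omega)
  set cP := (A.induce Wᶜ).connectedComponentMk ⟨vl (a₂+1) 0, hP⟩ with hcP
  set cM := (A.induce Wᶜ).connectedComponentMk ⟨vl (a₁-1) 0, hM⟩ with hcM
  have hsub : {c : (A.induce Wᶜ).ConnectedComponent |
      ¬ BoundedSet A (Subtype.val '' c.supp)} ⊆ {cP, cM} := by
    intro c hc
    simp only [Set.mem_setOf_eq] at hc
    have hex : ¬ (∀ x ∈ Subtype.val '' c.supp, a₁ - 1 ≤ π x ∧ π x ≤ a₂ + 1) := by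
      intro hall
      exact hc (bounded_of_pi (a₁-1) (a₂+1) hall)
    push_neg at hex
    obtain ⟨x, hx, hcond⟩ := hex
    obtain ⟨⟨x, hxW⟩, hsupp, rfl⟩ := hx
    rw [ConnectedComponent.mem_supp_iff] at hsupp
    by_cases hbig : a₂ + 1 < π x
    · -- connect x to the right anchor
      left
      rw [← hsupp, hcP]
      apply ConnectedComponent.sound
      -- first go to (π x, 0) within the same layer, or from blob to (0,0)
      have hx0 : vl (π x) 0 ∈ Wᶜ := hsurvP _ (by rw [π_vl]; omega)
      have r1 : (A.induce Wᶜ).Reachable ⟨x, hxW⟩ ⟨vl (π x) 0, hx0⟩ := by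
        rcases x with ⟨i,n⟩ | a
        · show (A.induce Wᶜ).Reachable ⟨vl i n, hxW⟩ ⟨vl i 0, _⟩
          rcases eq_or_ne n 0 with rfl | hn
          · exact Reachable.refl _
          · exact (ind_adj hxW hx0 (adj_layer hn)).reachable
        · show (A.induce Wᶜ).Reachable ⟨vr a, hxW⟩ ⟨vl 0 0, _⟩
          exact (ind_adj hxW hx0 ((adj_glue a).symm)).reachable
      refine r1.trans (col_reach 0 (π x) (a₂+1) (fun m hm1 hm2 => ?_) hx0 hP)
      have : a₂ < m := by
        simp only [min_def, max_def] at hm1 hm2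
        split_ifs at hm1 hm2 <;> omega
      exact hsurvP _ (by rw [π_vl]; omega)
    · -- then we must have π x < a₁ - 1 : connect to the left anchor
      have hsmall : π x < a₁ - 1 := by
        by_contra hn
        exact hbig (hcond (show a₁ - 1 ≤ π x by omega) : a₂ + 1 < π x)
      right
      rw [← hsupp, hcM]
      apply ConnectedComponent.sound
      have hx0 : vl (π x) 0 ∈ Wᶜ := hsurvM _ (by rw [π_vl]; omega)
      have r1 : (A.induce Wᶜ).Reachable ⟨x, hxW⟩ ⟨vl (π x) 0, hx0⟩ := by
        rcases x with ⟨i,n⟩ | a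
        · show (A.induce Wᶜ).Reachable ⟨vl i n, hxW⟩ ⟨vl i 0, _⟩
          rcases eq_or_ne n 0 with rfl | hn
          · exact Reachable.refl _
          · exact (ind_adj hxW hx0 (adj_layer hn)).reachable
        · show (A.induce Wᶜ).Reachable ⟨vr a, hxW⟩ ⟨vl 0 0, _⟩
          exact (ind_adj hxW hx0 ((adj_glue a).symm)).reachable
      refine r1.trans (col_reach 0 (π x) (a₁-1) (fun m hm1 hm2 => ?_) hx0 hM)
      have : m < a₁ := by
        simp only [min_def, max_def] at hm1 hm2
        split_ifs at hm1 hm2 <;> omega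
      exact hsurvM _ (by rw [π_vl]; omega)
  refine le_trans (Set.encard_mono hsub) ?_
  refine le_trans (Set.encard_insert_le _ _) ?_
  rw [Set.encard_singleton]
  norm_num


def Wb (k : ℕ) : Set Vt :=
  {v | ∃ (i : ℤ) (n : ℕ), v = vl i n ∧ 0 ≤ i ∧ i ≤ (k:ℤ)+1 ∧
    (i = 0 ∨ i = (k:ℤ)+1 ∨ (n:ℤ) % 2 ≠ i % 2)}

lemma Wb_mem_iff (k : ℕ) (i : ℤ) (n : ℕ) :
    vl i n ∈ Wb k ↔ 0 ≤ i ∧ i ≤ (k:ℤ)+1 ∧ (i = 0 ∨ i = (k:ℤ)+1 ∨ (n:ℤ) % 2 ≠ i % 2) := by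
  constructor
  · rintro ⟨i', n', heq, h⟩
    simp only [vl, Sum.inl.injEq, Prod.mk.injEq] at heq
    obtain ⟨rfl, rfl⟩ := heq
    exact h
  · intro h
    exact ⟨i, n, rfl, h⟩

lemma Wb_bounded (k : ℕ) : BoundedSet A (Wb k) := by
  refine bounded_of_pi 0 ((k:ℤ)+1) ?_
  rintro v ⟨i, n, rfl, h1, h2, _⟩
  rw [π_vl]
  exact ⟨h1, h2⟩

lemma Wb_vr_surv (k : ℕ) (a : ℕ) : vr a ∈ (Wb k)ᶜ := by
  rintro ⟨i, n, heq, _⟩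
  exact absurd heq (by simp [vr, vl])

lemma layer_pres (k : ℕ) (t : ℤ) (ht1 : 1 ≤ t) (ht2 : t ≤ (k:ℤ)) :
    ∀ u v : ↥(Wb k)ᶜ, (A.induce (Wb k)ᶜ).Adj u v → π (u:Vt) = t → π (v:Vt) = t := by
  rintro ⟨⟨i,n⟩|a, hu⟩ ⟨⟨j,m⟩|b, hv⟩ hadj h
  · obtain ⟨hne, hr⟩ := hadj
    show (j:ℤ) = t
    simp only [π, Sum.elim_inl] at h
    have hu' : ¬ (0 ≤ i ∧ i ≤ (k:ℤ)+1 ∧ (i = 0 ∨ i = (k:ℤ)+1 ∨ (n:ℤ) % 2 ≠ i % 2)) :=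
      fun hc => hu ((Wb_mem_iff k i n).mpr hc)
    have hv' : ¬ (0 ≤ j ∧ j ≤ (k:ℤ)+1 ∧ (j = 0 ∨ j = (k:ℤ)+1 ∨ (m:ℤ) % 2 ≠ j % 2)) :=
      fun hc => hv ((Wb_mem_iff k j m).mpr hc)
    have hr' : i = j ∨ (n = m ∧ (i = j + 1 ∨ j = i + 1)) := hr
    omega
  · obtain ⟨hne, hr⟩ := hadj
    obtain ⟨h1, h2⟩ : i = 0 ∧ n = 0 := hr
    simp only [π, Sum.elim_inl] at h
    omega
  · simp only [π, Sum.elim_inr] at h; omega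
  · simp only [π, Sum.elim_inr] at h; omega

lemma Wb_surv (k : ℕ) (i : ℤ) (n : ℕ) (h1 : 1 ≤ i) (h2 : i ≤ (k:ℤ))
    (hpar : (n:ℤ) % 2 = i % 2) : vl i n ∈ (Wb k)ᶜ := by
  intro hmem
  rw [Wb_mem_iff] at hmem
  omega

lemma le_ICC_Wb (k : ℕ) : (k : ℕ∞) ≤ ICC A (Wb k) := by
  have hsurv : ∀ t : Fin k, ∀ m : ℕ, vl ((t:ℤ)+1) ((t.val+1) % 2 + 2*m) ∈ (Wb k)ᶜ := by
    intro t m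
    refine Wb_surv k _ _ (by omega) (by have := t.isLt; omega) (by omega)
  set f : Fin k → (A.induce (Wb k)ᶜ).ConnectedComponent := fun t =>
    (A.induce (Wb k)ᶜ).connectedComponentMk ⟨vl ((t:ℤ)+1) ((t.val+1) % 2), by
      have := hsurv t 0
      simpa using this⟩ with hf
  have hinj : Function.Injective f := by
    intro t t' heq
    rw [hf] at heq
    simp only [ConnectedComponent.eq] at heq
    have := reach_invariant (fun x : ↥(Wb k)ᶜ => π (x:Vt) = (t:ℤ)+1)
      (layer_pres k ((t:ℤ)+1) (by omega) (by have := t.isLt; omega)) heq (by simp)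
    simp only [π_vl] at this
    have : (t:ℤ) = (t':ℤ) := by omega
    exact Fin.ext (by exact_mod_cast this)
  have hinf : ∀ t : Fin k, (f t).supp.Infinite := by
    intro t
    apply Set.infinite_of_injective_forall_mem
      (f := fun m : ℕ => (⟨vl ((t:ℤ)+1) ((t.val+1) % 2 + 2*m), hsurv t m⟩ : ↥(Wb k)ᶜ))
    · intro a b hab
      simp only [Subtype.mk.injEq, vl, Sum.inl.injEq, Prod.mk.injEq] at hab
      omega
    · intro m
      rw [ConnectedComponent.mem_supp_iff, hf]
      rcases Nat.eq_zero_or_pos m with rfl | hm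
      · exact congrArg _ (Subtype.ext (by norm_num))
      · exact ConnectedComponent.sound
          (ind_adj _ _ (adj_layer (by omega))).reachable
  have hrange : Set.range f ⊆ {c : (A.induce (Wb k)ᶜ).ConnectedComponent | c.supp.Infinite} := by
    rintro c ⟨t, rfl⟩
    exact hinf t
  calc (k : ℕ∞) = (Set.range f).encard := by
        rw [← Set.image_univ, hinj.encard_image, Set.encard_univ]
        simp
    _ ≤ ICC A (Wb k) := Set.encard_mono hrange

lemma enat_eq_top {x : ℕ∞} (h : ∀ k : ℕ, (k:ℕ∞) ≤ x) : x = ⊤ := by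
  induction x using ENat.recTopCoe with
  | top => rfl
  | coe n =>
    have := h (n+1)
    have : n + 1 ≤ n := by exact_mod_cast this
    omega

end StrictEnds

/-- There exists a connected countable graph `A` with `FU(A) = 1`, `FI(A) = 2`,
`BU(A) = 2`, and `BI(A) = ∞`; in particular each of the inequalities
`FU ≤ BU`, `BU ≤ BI`, `FU ≤ FI`, `FI ≤ BI` can be strict. -/
theorem exists_graph_with_strict_end_counts :
    ∃ (V : Type) (G : SimpleGraph V), Countable V ∧ G.Connected ∧
      FU G = 1 ∧ FI G = 2 ∧ BU G = 2 ∧ BI G = ⊤ := by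
  refine ⟨StrictEnds.Vt, StrictEnds.A, inferInstance, StrictEnds.A_conn, ?_, ?_, ?_, ?_⟩
  · apply le_antisymm
    · exact iSup₂_le fun W hW => StrictEnds.UCC_le_one hW
    · exact le_iSup₂_of_le ∅ Set.finite_empty StrictEnds.one_le_UCC_empty
  · apply le_antisymm
    · exact iSup₂_le fun W hW => StrictEnds.ICC_le_two hW
    · exact le_iSup₂_of_le StrictEnds.W₁ (Set.finite_singleton _) StrictEnds.two_le_ICC_W₁
  · apply le_antisymm
    · exact iSup₂_le fun W hW => StrictEnds.UCC_le_two hW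
    · exact le_iSup₂_of_le StrictEnds.W₀ StrictEnds.W₀_bounded StrictEnds.two_le_UCC_W₀
  · apply StrictEnds.enat_eq_top
    intro k
    exact le_iSup₂_of_le (StrictEnds.Wb k) (StrictEnds.Wb_bounded k) (StrictEnds.le_ICC_Wb k)
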